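/- Let A be a mutually uncorrelated set of M words, each of length n ≥ 1, over the four-letter DNA alphabet {A,T,G,C}, and let c_ℓ = |C_A(ℓ)|. Then in the ring of formal power series ℤ⟦X⟧, the generating function F(X) = ∑_{ℓ≥0} c_ℓ X^ℓ satisfies (1 − 4X + M·X^n)·F(X) = 1, i.e., F(X) = 1/(1 − 4X + M·X^n). -/

import Mathlib

/-- The four-letter DNA alphabet. -/
inductive DNA | A | T | G | C
deriving DecidableEq

/-- Hamming distance between two words (of equal length) given as lists. -/
def hammingD {α : Type*} [DecidableEq α] (x y : List α) : ℕ :=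
  (x.zip y).countP (fun p => decide (p.1 ≠ p.2))

/-- A binary word has `D`-bounded running digital sum if in every prefix the
numbers of ones and zeros differ by at most `D`. -/
def brds (D : ℕ) (w : List Bool) : Prop :=
  ∀ k ≤ w.length,
    (((w.take k).count true : ℤ) - ((w.take k).count false : ℤ)).natAbs ≤ D

/-- The letters `G`, `C` of the DNA alphabet. -/
def isGC : DNA → Bool
  | DNA.G => true
  | DNA.C => true
  | _ => false

/-- A DNA word is `D`-GC-prefix-balanced if in every prefix the number of
letters from {G,C} and the number of letters from {A,T} differ by at most `D`. -/
def gcpb (D : ℕ) (w : List DNA) : Prop :=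
  ∀ k ≤ w.length,
    (((w.take k).countP isGC : ℤ) - ((w.take k).countP (fun c => !(isGC c)) : ℤ)).natAbs ≤ D

/-- A word is self-uncorrelated if no proper nonempty prefix equals the suffix
of the same length. -/
def selfUncorr {α : Type*} (w : List α) : Prop :=
  ∀ k, 1 ≤ k → k ≤ w.length - 1 → w.take k ≠ w.drop (w.length - k)

/-- A set of words is mutually uncorrelated if every word is self-uncorrelated
and for every ordered pair of distinct words `x`, `y` no nonempty prefix of `y`
equals a suffix of `x` of the same length. -/
def mutUncorr {α : Type*} (S : Set (List α)) : Prop :=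
  (∀ w ∈ S, selfUncorr w) ∧
  ∀ x ∈ S, ∀ y ∈ S, x ≠ y →
    ∀ k, 1 ≤ k → k ≤ x.length → y.take k ≠ x.drop (x.length - k)

/-- A Dyck word: equal numbers of ones and zeros, and every prefix has at least
as many ones as zeros. -/
def isDyck (w : List Bool) : Prop :=
  w.count true = w.count false ∧
  ∀ k ≤ w.length, (w.take k).count false ≤ (w.take k).count true

/-- The height of a (Dyck) word is at most `D`: in every prefix the number of
ones exceeds the number of zeros by at most `D`. -/
def heightLe (D : ℕ) (w : List Bool) : Prop :=
  ∀ k ≤ w.length, ((w.take k).count true : ℤ) - ((w.take k).count false : ℤ) ≤ (D : ℤ)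

/-- `avoidCount A ℓ`: the number of DNA words of length `ℓ` containing no word
of `A` as a contiguous substring. -/
noncomputable def avoidCount (A : Finset (List DNA)) (l : ℕ) : ℕ :=
  Set.ncard {w : List DNA | w.length = l ∧ ∀ a ∈ A, ¬ a <:+: w}

instance : Fintype DNA :=
  ⟨{DNA.A, DNA.T, DNA.G, DNA.C}, fun x => by cases x <;> simp⟩

namespace Stmt13Aux

def SS (A : Finset (List DNA)) (l : ℕ) : Set (List DNA) :=
  {w : List DNA | w.length = l ∧ ∀ a ∈ A, ¬ a <:+: w}

def TT (A : Finset (List DNA)) (l : ℕ) : Set (List DNA) :=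
  {w : List DNA | w.length = l ∧ ∀ a ∈ A, ¬ a <:+: w.dropLast}

lemma finSS (A : Finset (List DNA)) (l : ℕ) : (SS A l).Finite :=
  (List.finite_length_eq DNA l).subset fun _ hw => hw.1

lemma finTT (A : Finset (List DNA)) (l : ℕ) : (TT A l).Finite :=
  (List.finite_length_eq DNA l).subset fun _ hw => hw.1

lemma SS_subset_TT (A : Finset (List DNA)) (l : ℕ) : SS A l ⊆ TT A l :=
  fun w hw => ⟨hw.1, fun a ha hinf =>
    hw.2 a ha (hinf.trans (List.dropLast_prefix w).isInfix)⟩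

lemma SS_zero (A : Finset (List DNA)) (n : ℕ) (hn : 1 ≤ n)
    (hlen : ∀ w ∈ A, w.length = n) : SS A 0 = {[]} := by
  ext w
  simp only [SS, Set.mem_setOf_eq, Set.mem_singleton_iff, List.length_eq_zero_iff]
  constructor
  · exact fun h => h.1
  · rintro rfl
    refine ⟨rfl, fun a ha hinf => ?_⟩
    simp only [List.infix_nil] at hinf
    have h2 := hlen a ha
    rw [hinf] at h2
    simp at h2
    omega

/-- Key lemma: if `u` avoids `A`, then `u ++ a.dropLast` avoids `A`. -/
lemma key (n : ℕ) (hn : 1 ≤ n) (A : Finset (List DNA))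
    (hlen : ∀ w ∈ A, w.length = n) (hmu : mutUncorr (A : Set (List DNA)))
    (u : List DNA) (hu : ∀ c ∈ A, ¬ c <:+: u)
    (a : List DNA) (ha : a ∈ A) (b : List DNA) (hb : b ∈ A) :
    ¬ b <:+: (u ++ a.dropLast) := by
  rintro ⟨s, t, hst⟩
  have hbn : b.length = n := hlen b hb
  have han : a.length = n := hlen a ha
  have hL : s.length + (b.length + t.length) = u.length + (a.length - 1) := by
    have := congrArg List.length hst
    simpa using this
  by_cases hcase : s.length + n ≤ u.length
  · -- the occurrence lies inside u
    have h1 : s ++ b <+: u ++ a.dropLast := ⟨t, by simpa [List.append_assoc] using hst⟩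
    have h2 : u <+: u ++ a.dropLast := List.prefix_append _ _
    have h3 : s ++ b <+: u := by
      apply List.prefix_of_prefix_length_le h1 h2
      simp [hbn]; omega
    exact hu b hb (((List.suffix_append s b).isInfix).trans h3.isInfix)
  · -- the occurrence overlaps a
    push_neg at hcase
    set j : ℕ := u.length - s.length with hj
    have hj1 : 1 ≤ j := by omega
    have hjn : j < n := by omega
    have hdrop : a.dropLast = b.drop j ++ t := by
      have h1 : (u ++ a.dropLast).drop u.length = a.dropLast := List.drop_left
      rw [← hst] at h1
      rw [List.append_assoc] at h1
      have h2 : (s ++ (b ++ t)).drop u.length = (b ++ t).drop j := by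
        rw [show u.length = s.length + j by omega]
        exact List.drop_length_add_append j
      rw [h2] at h1
      rw [List.drop_append_of_le_length (by omega)] at h1
      exact h1.symm
    set k : ℕ := n - j with hk
    have htake : a.take k = b.drop j := by
      have h1 : a.take k = a.dropLast.take k := by
        rw [List.dropLast_eq_take, List.take_take]
        congr 1
        omega
      rw [h1, hdrop]
      apply List.take_left'
      simp [hbn]; omega
    by_cases hab : b = a
    · subst hab
      exact hmu.1 b (Finset.mem_coe.2 hb) k (by omega) (by omega)
        (by rw [htake]; congr 1; omega)
    · exact hmu.2 b (Finset.mem_coe.2 hb) a (Finset.mem_coe.2 ha) hab k (by omega)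
        (by omega) (by rw [htake]; congr 1; omega)

lemma TT_eq (A : Finset (List DNA)) (l : ℕ) (hl : 1 ≤ l) :
    TT A l = (fun p : List DNA × DNA => p.1 ++ [p.2]) '' (SS A (l - 1) ×ˢ Set.univ) := by
  ext w
  constructor
  · rintro ⟨hwl, hav⟩
    have hne : w ≠ [] := by
      intro h; rw [h] at hwl; simp at hwl; omega
    refine ⟨(w.dropLast, w.getLast hne), ⟨⟨?_, ?_⟩, Set.mem_univ _⟩,
      List.dropLast_append_getLast hne⟩
    · simp [hwl]
    · exact hav
  · rintro ⟨⟨u, d⟩, ⟨⟨hul, hua⟩, -⟩, rfl⟩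
    refine ⟨by simp [hul]; omega, ?_⟩
    simpa [List.dropLast_concat] using hua

lemma TT_small (A : Finset (List DNA)) (n l : ℕ) (hl : l < n)
    (hlen : ∀ w ∈ A, w.length = n) : TT A l = SS A l := by
  apply Set.Subset.antisymm _ (SS_subset_TT A l)
  rintro w ⟨hwl, -⟩
  refine ⟨hwl, fun a ha hinf => ?_⟩
  have h1 := hinf.length_le
  have h2 := hlen a ha
  omega

lemma B_eq (n : ℕ) (hn : 1 ≤ n) (A : Finset (List DNA))
    (hlen : ∀ w ∈ A, w.length = n) (hmu : mutUncorr (A : Set (List DNA)))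
    (l : ℕ) (hl : n ≤ l) :
    TT A l \ SS A l
      = (fun p : List DNA × List DNA => p.1 ++ p.2) '' (SS A (l - n) ×ˢ (A : Set (List DNA))) := by
  ext w
  constructor
  · rintro ⟨⟨hwl, hdrop⟩, hns⟩
    simp only [SS, Set.mem_setOf_eq, not_and, not_forall, not_not] at hns
    obtain ⟨b, hb, hinf⟩ := hns hwl
    obtain ⟨s, t, hst⟩ := hinf
    have hbn : b.length = n := hlen b hb
    have hbne : b ≠ [] := by intro h; rw [h] at hbn; simp at hbn; omega
    have ht : t = [] := by
      by_contra ht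
      apply hdrop b hb
      refine ⟨s, t.dropLast, ?_⟩
      conv_rhs => rw [← hst]
      have h5 : (s ++ b ++ t).dropLast = s ++ (b ++ t.dropLast) := by
        rw [List.append_assoc, List.dropLast_append_of_ne_nil (show b ++ t ≠ [] by simp [ht]),
          List.dropLast_append_of_ne_nil ht]
      rw [h5, List.append_assoc]
    subst ht
    simp only [List.append_nil] at hst
    have hs : s ∈ SS A (l - n) := by
      constructor
      · have := congrArg List.length hst
        simp [hwl, hbn] at this ⊢
        omega
      · intro c hc hinfc
        apply hdrop c hc
        have hpre : s <+: w.dropLast := by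
          rw [← hst, List.dropLast_append_of_ne_nil hbne]
          exact List.prefix_append _ _
        exact hinfc.trans hpre.isInfix
    exact ⟨(s, b), ⟨hs, Finset.mem_coe.2 hb⟩, hst⟩
  · rintro ⟨⟨u, a⟩, ⟨⟨hul, hua⟩, ha⟩, rfl⟩
    have ha' : a ∈ A := Finset.mem_coe.1 ha
    have han : a.length = n := hlen a ha'
    have hane : a ≠ [] := by intro h; rw [h] at han; simp at han; omega
    constructor
    · refine ⟨by simp [hul, han]; omega, fun b hb hinf => ?_⟩
      rw [List.dropLast_append_of_ne_nil hane] at hinf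
      exact key n hn A hlen hmu u hua a ha' b hb hinf
    · intro hmem
      exact hmem.2 a ha' ⟨u, [], by simp⟩

lemma ncard_prod_aux {α β : Type*} (s : Set α) (t : Set β) (hs : s.Finite) (ht : t.Finite) :
    (s ×ˢ t).ncard = s.ncard * t.ncard := by
  rw [← Nat.card_coe_set_eq, ← Nat.card_coe_set_eq, ← Nat.card_coe_set_eq,
    Nat.card_congr (Equiv.Set.prod s t), Nat.card_prod]

lemma ncard_TT (n : ℕ) (A : Finset (List DNA)) (l : ℕ) (hl : 1 ≤ l) :
    (TT A l).ncard = 4 * (SS A (l - 1)).ncard := by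
  rw [TT_eq A l hl]
  rw [Set.ncard_image_of_injOn (by
    rintro ⟨u, d⟩ - ⟨u', d'⟩ - h
    simp only at h
    obtain ⟨h1, h2⟩ := List.append_inj' h (by simp)
    simp at h2
    simp [h1, h2])]
  rw [ncard_prod_aux _ _ (finSS A _) (Set.finite_univ)]
  rw [Set.ncard_univ, Nat.card_eq_fintype_card]
  have hc : Fintype.card DNA = 4 := by decide
  rw [hc]; ring

lemma ncard_B (n M : ℕ) (hn : 1 ≤ n) (A : Finset (List DNA)) (hcard : A.card = M)
    (hlen : ∀ w ∈ A, w.length = n) (hmu : mutUncorr (A : Set (List DNA)))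
    (l : ℕ) (hl : n ≤ l) :
    (TT A l \ SS A l).ncard = M * (SS A (l - n)).ncard := by
  rw [B_eq n hn A hlen hmu l hl]
  rw [Set.ncard_image_of_injOn (by
    rintro ⟨u, a⟩ ⟨-, ha⟩ ⟨u', a'⟩ ⟨-, ha'⟩ h
    simp only at h
    obtain ⟨h1, h2⟩ := List.append_inj' h (by
      rw [hlen a (Finset.mem_coe.1 ha), hlen a' (Finset.mem_coe.1 ha')])
    simp [h1, h2])]
  rw [ncard_prod_aux _ _ (finSS A _) (Set.finite_coe_iff.1 inferInstance)]
  rw [Set.ncard_coe_finset, hcard]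
  ring

lemma rec_main (n M : ℕ) (hn : 1 ≤ n) (A : Finset (List DNA)) (hcard : A.card = M)
    (hlen : ∀ w ∈ A, w.length = n) (hmu : mutUncorr (A : Set (List DNA)))
    (l : ℕ) (hl : 1 ≤ l) :
    4 * (SS A (l - 1)).ncard
      = (SS A l).ncard + (if n ≤ l then M * (SS A (l - n)).ncard else 0) := by
  have hsplit : TT A l = SS A l ∪ (TT A l \ SS A l) :=
    (Set.union_diff_cancel (SS_subset_TT A l)).symm
  have hcount : (TT A l).ncard = (SS A l).ncard + (TT A l \ SS A l).ncard := by
    have := Set.ncard_union_eq (s := SS A l) (t := TT A l \ SS A l)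
      Set.disjoint_sdiff_right (finSS A l) ((finTT A l).subset Set.diff_subset)
    rw [← hsplit] at this
    exact this
  rw [← ncard_TT n A l hl, hcount]
  congr 1
  by_cases h : n ≤ l
  · rw [if_pos h]
    exact ncard_B n M hn A hcard hlen hmu l h
  · rw [if_neg h]
    rw [TT_small A n l (by omega) hlen]
    simp

end Stmt13Aux

open Stmt13Aux in
/-- the generating function `F(X) = ∑ c_ℓ X^ℓ` of the avoidance
counts satisfies `(1 - 4X + M X^n) F(X) = 1` in `ℤ⟦X⟧`. -/
theorem stmt13 (n M : ℕ) (hn : 1 ≤ n) (A : Finset (List DNA))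
    (hcard : A.card = M) (hlen : ∀ w ∈ A, w.length = n)
    (hmu : mutUncorr (A : Set (List DNA))) :
    (1 - 4 * PowerSeries.X + PowerSeries.C (M : ℤ) * PowerSeries.X ^ n) *
      PowerSeries.mk (fun l => (avoidCount A l : ℤ)) = 1 := by
  have hav : ∀ l, avoidCount A l = (SS A l).ncard := fun l => rfl
  have h4 : (4 : PowerSeries ℤ) = PowerSeries.C 4 := by
    simp
  have expand : (1 - 4 * PowerSeries.X + PowerSeries.C (M : ℤ) * PowerSeries.X ^ n) *
      PowerSeries.mk (fun l => (avoidCount A l : ℤ))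
      = PowerSeries.mk (fun l => (avoidCount A l : ℤ))
        - PowerSeries.C 4 * (PowerSeries.mk (fun l => (avoidCount A l : ℤ)) * PowerSeries.X ^ 1)
        + PowerSeries.C (M : ℤ) * (PowerSeries.mk (fun l => (avoidCount A l : ℤ)) * PowerSeries.X ^ n) := by
    rw [← h4]; ring
  rw [expand]
  ext l
  simp only [map_add, map_sub, PowerSeries.coeff_C_mul, PowerSeries.coeff_mul_X_pow',
    PowerSeries.coeff_mk, PowerSeries.coeff_one]
  rcases Nat.eq_zero_or_pos l with rfl | hl
  · have h0 : SS A 0 = {[]} := SS_zero A n hn hlen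
    rw [if_neg (show ¬ (1:ℕ) ≤ 0 by omega), if_neg (show ¬ n ≤ 0 by omega), if_pos rfl]
    simp [hav, h0]
  · have hrec := rec_main n M hn A hcard hlen hmu l hl
    rw [if_pos (show 1 ≤ l by omega), if_neg (show ¬ l = 0 by omega)]
    by_cases h : n ≤ l
    · rw [if_pos h] at hrec ⊢
      have hz : ((4 * (SS A (l-1)).ncard : ℕ) : ℤ)
          = (((SS A l).ncard + M * (SS A (l-n)).ncard : ℕ) : ℤ) := by exact_mod_cast hrec
      push_cast at hz
      simp only [hav]
      push_cast
      linarith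
    · rw [if_neg h] at hrec ⊢
      have hz : ((4 * (SS A (l-1)).ncard : ℕ) : ℤ) = (((SS A l).ncard + 0 : ℕ) : ℤ) := by
        exact_mod_cast hrec
      push_cast at hz
      simp only [hav]
      push_cast
      linarith
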